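/- Let 𝔐 be a class of preference models and ℭ a class of dynamic operators closed over 𝔐 such that every ★ ∈ ℭ satisfies (GR). Then for every propositional formula φ ∈ L_0, the formula (μ¬φ ∨ μ⊤) ↔ [★φ]μ⊤ is valid in ⟨𝔐, ℭ⟩, where ⊤ is a fixed propositional tautology. -/

import Mathlib

inductive PForm (P : Type) : Type
  | atom : P → PForm P
  | neg  : PForm P → PForm P
  | and  : PForm P → PForm P → PForm P

inductive DForm (P : Type) : Type
  | atom  : P → DForm P
  | neg   : DForm P → DForm P
  | and   : DForm P → DForm P → DForm P
  | all   : DForm P → DForm P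
  | boxLe : DForm P → DForm P
  | boxLt : DForm P → DForm P
  | dyn   : PForm P → DForm P → DForm P

structure PrefModel (P : Type) where
  W : Type
  le : W → W → Prop
  refl : ∀ w, le w w
  trans : ∀ w₁ w₂ w₃, le w₁ w₂ → le w₂ w₃ → le w₁ w₃
  wf : WellFounded (fun w w' => le w w' ∧ ¬ le w' w)
  val : P → Set W

namespace PrefModel
variable {P : Type}
def lt (M : PrefModel P) (w w' : M.W) : Prop := M.le w w' ∧ ¬ M.le w' w
def Min (M : PrefModel P) (S : Set M.W) : Set M.W :=
  {w | w ∈ S ∧ ¬ ∃ w' ∈ S, M.le w' w ∧ ¬ M.le w w'}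
end PrefModel

def psat {P : Type} (M : PrefModel P) : PForm P → M.W → Prop
  | .atom p, w => w ∈ M.val p
  | .neg φ, w => ¬ psat M φ w
  | .and φ ψ, w => psat M φ w ∧ psat M ψ w

def pext {P : Type} (M : PrefModel P) (φ : PForm P) : Set M.W := {w | psat M φ w}

structure DynOp (P : Type) where
  rel : (M : PrefModel P) → PForm P → M.W → M.W → Prop
  refl : ∀ M φ w, rel M φ w w
  trans : ∀ M φ w₁ w₂ w₃, rel M φ w₁ w₂ → rel M φ w₂ w₃ → rel M φ w₁ w₃
  wf : ∀ M φ, WellFounded (fun w w' => rel M φ w w' ∧ ¬ rel M φ w' w)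

def DynOp.apply {P : Type} (s : DynOp P) (M : PrefModel P) (φ : PForm P) : PrefModel P where
  W := M.W
  le := s.rel M φ
  refl := s.refl M φ
  trans := s.trans M φ
  wf := s.wf M φ
  val := M.val

def DynOp.srel {P : Type} (s : DynOp P) (M : PrefModel P) (φ : PForm P) (w w' : M.W) : Prop :=
  s.rel M φ w w' ∧ ¬ s.rel M φ w' w

def PForm.toD {P : Type} : PForm P → DForm P
  | .atom p => .atom p
  | .neg φ => .neg φ.toD
  | .and φ ψ => .and φ.toD ψ.toD

namespace DForm
variable {P : Type}
def imp (ξ ψ : DForm P) : DForm P := .neg (.and ξ (.neg ψ))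
def iff (ξ ψ : DForm P) : DForm P := .and (imp ξ ψ) (imp ψ ξ)
def or (ξ ψ : DForm P) : DForm P := .neg (.and (.neg ξ) (.neg ψ))
def exi (ξ : DForm P) : DForm P := .neg (.all (.neg ξ))
def diaLt (ξ : DForm P) : DForm P := .neg (.boxLt (.neg ξ))
def mu (ξ : DForm P) : DForm P := .and ξ (.neg (diaLt ξ))
def bel (ψ χ : DForm P) : DForm P := .all (imp (mu χ) ψ)
end DForm

def dsat {P : Type} (s : DynOp P) : DForm P → (M : PrefModel P) → M.W → Prop
  | .atom p, M, w => w ∈ M.val p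
  | .neg ξ, M, w => ¬ dsat s ξ M w
  | .and ξ₁ ξ₂, M, w => dsat s ξ₁ M w ∧ dsat s ξ₂ M w
  | .all ξ, M, _ => ∀ w', dsat s ξ M w'
  | .boxLe ξ, M, w => ∀ w', M.le w' w → dsat s ξ M w'
  | .boxLt ξ, M, w => ∀ w', M.lt w' w → dsat s ξ M w'
  | .dyn φ ξ, M, w => dsat s ξ (s.apply M φ) w

def ClosedOver {P : Type} (s : DynOp P) (𝔐 : Set (PrefModel P)) : Prop :=
  ∀ M ∈ 𝔐, ∀ φ : PForm P, s.apply M φ ∈ 𝔐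

/-- `★` satisfies (GR). -/
def GR {P : Type} (s : DynOp P) : Prop :=
  ∀ (M : PrefModel P) (φ : PForm P),
    (s.apply M φ).Min Set.univ = M.Min Set.univ ∪ M.Min (pext M (PForm.neg φ))

/-! The formula `μξ` holds exactly at the `≤`-minimal `ξ`-worlds. Hence the left-hand side holds
exactly on `Min_≤ W ∪ Min_≤ ⟦¬φ⟧`, the right-hand side exactly on `Min_{≤★φ} W`, and (GR) says
these sets coincide. -/

section Semantics

variable {P : Type} (s : DynOp P) (M : PrefModel P)

lemma dsat_toD (p : PForm P) (w : M.W) : dsat s p.toD M w ↔ psat M p w := by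
  induction p with
  | atom q => rfl
  | neg p ih => simp only [PForm.toD, dsat, psat, ih]
  | and p q ihp ihq => simp only [PForm.toD, dsat, psat, ihp, ihq]

lemma dsat_or (ξ ψ : DForm P) (w : M.W) :
    dsat s (ξ.or ψ) M w ↔ dsat s ξ M w ∨ dsat s ψ M w := by
  simp only [DForm.or, dsat]
  tauto

lemma dsat_iff (ξ ψ : DForm P) (w : M.W) :
    dsat s (ξ.iff ψ) M w ↔ (dsat s ξ M w ↔ dsat s ψ M w) := by
  simp only [DForm.iff, DForm.imp, dsat]
  tauto

lemma dsat_mu_iff_mem_min {ξ : DForm P} {S : Set M.W} (hξ : ∀ w, dsat s ξ M w ↔ w ∈ S)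
    (w : M.W) : dsat s (DForm.mu ξ) M w ↔ w ∈ M.Min S := by
  simp only [DForm.mu, DForm.diaLt, dsat, not_not, PrefModel.Min, PrefModel.lt, hξ,
    Set.mem_ofPred_eq, not_exists, not_and]
  exact and_congr_right' ⟨fun h x hx hle => by_contra fun hn => h x ⟨hle, hn⟩ hx,
    fun h x hlt hx => hlt.2 (h x hx hlt.1)⟩

lemma dsat_mu_toD (p : PForm P) (w : M.W) :
    dsat s (DForm.mu p.toD) M w ↔ w ∈ M.Min (pext M p) :=
  dsat_mu_iff_mem_min s M (dsat_toD s M p) w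

lemma dsat_mu_toD_of_valid {p : PForm P} (hp : ∀ w, psat M p w) (w : M.W) :
    dsat s (DForm.mu p.toD) M w ↔ w ∈ M.Min Set.univ := by
  rw [dsat_mu_toD, Set.eq_univ_of_forall (s := pext M p) hp]

end Semantics

theorem gr_validity_general {P : Type} (𝔐 : Set (PrefModel P)) (ℭ : Set (DynOp P))
    (hgr : ∀ s ∈ ℭ, GR s)
    (φ top : PForm P) (htop : ∀ (M : PrefModel P) (w : M.W), psat M top w) :
    ∀ s ∈ ℭ, ∀ M ∈ 𝔐, ∀ w : M.W,
      dsat s (((DForm.mu (DForm.neg φ.toD)).or (DForm.mu top.toD)).iff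
        (DForm.dyn φ (DForm.mu top.toD))) M w := by
  intro s hs M _ w
  have hprior : dsat s ((DForm.mu (DForm.neg φ.toD)).or (DForm.mu top.toD)) M w ↔
      w ∈ M.Min Set.univ ∪ M.Min (pext M (.neg φ)) := by
    rw [dsat_or, dsat_mu_toD_of_valid s M (htop M), Set.mem_union, or_comm]
    exact or_congr_right (dsat_mu_toD s M (.neg φ) w)
  have hupdated : dsat s (DForm.dyn φ (DForm.mu top.toD)) M w ↔
      w ∈ (s.apply M φ).Min Set.univ :=
    dsat_mu_toD_of_valid s (s.apply M φ) (htop _) w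
  rw [dsat_iff, hprior, hupdated, hgr s hs M φ]
  exact Iff.rfl

theorem gr_validity {P : Type} (𝔐 : Set (PrefModel P)) (ℭ : Set (DynOp P))
    (hclosed : ∀ s ∈ ℭ, ClosedOver s 𝔐) (hgr : ∀ s ∈ ℭ, GR s)
    (φ top : PForm P) (htop : ∀ (M : PrefModel P) (w : M.W), psat M top w) :
    ∀ s ∈ ℭ, ∀ M ∈ 𝔐, ∀ w : M.W,
      dsat s (((DForm.mu (DForm.neg φ.toD)).or (DForm.mu top.toD)).iff
        (DForm.dyn φ (DForm.mu top.toD))) M w :=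
  gr_validity_general 𝔐 ℭ hgr φ top htop
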